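/- arXiv:1111.7240 — 3 statements merged into one kernel-verified Lean document; each statement's English description precedes it below -/
import Mathlib

section
/- Every two-dimensional unital commutative subalgebra C of a real C*-algebra A (with C closed under the involution and consisting of self-adjoint elements spanned together with 1) that is an atom in the poset of unital self-adjoint commutative subalgebras is of the form span{p, 1−p} for some projection p ∈ A with p ≠ 0 and p ≠ 1. -/
open Submodule Module

/-- A self-adjoint element squaring to zero in a C*-algebra is zero. -/
lemma stmt3_aux_sq_zero {A : Type*} [NormedRing A] [StarRing A] [CStarRing A]
    {y : A} (hy : star y = y) (h : y * y = 0) : y = 0 := by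
  have h1 : ‖y‖ * ‖y‖ = 0 := by
    rw [← CStarRing.norm_star_mul_self, hy, h, norm_zero]
  have h2 : ‖y‖ = 0 := by nlinarith [norm_nonneg y]
  exact norm_eq_zero.mp h2

/-- A self-adjoint element of a unital C*-algebra cannot square to a negative
multiple of the identity. -/
lemma stmt3_aux_neg_sq {A : Type*} [NormedRing A] [StarRing A] [CStarRing A]
    [CompleteSpace A] [NormedAlgebra ℂ A] [StarModule ℂ A] [Nontrivial A]
    {y : A} (hy : star y = y) {r : ℝ} (hr : r < 0)
    (h : y * y = (r : ℂ) • 1) : False := by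
  letI : CStarAlgebra A := { }
  obtain ⟨z, hz⟩ := spectrum.nonempty y
  have hsa : IsSelfAdjoint y := hy
  have hzre : z = (z.re : ℂ) := hsa.mem_spectrum_eq_re hz
  set t : ℝ := z.re with ht
  have hcne : ((t ^ 2 - r : ℝ) : ℂ) ≠ 0 := by
    have : (0:ℝ) < t ^ 2 - r := by nlinarith [sq_nonneg t]
    exact_mod_cast ne_of_gt this
  -- the explicit inverse of `t • 1 - y`
  set u : A := (((t ^ 2 - r : ℝ) : ℂ))⁻¹ • ((t : ℂ) • 1 + y) with hu
  have expand : ((t : ℂ) • 1 - y) * ((t : ℂ) • 1 + y) = ((t ^ 2 - r : ℝ) : ℂ) • 1 := by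
    have : ((t : ℂ) • 1 - y) * ((t : ℂ) • 1 + y)
        = ((t:ℂ) * (t:ℂ)) • 1 + (t:ℂ) • y - (t:ℂ) • y - y * y := by
      simp only [sub_mul, mul_add, smul_mul_assoc, mul_smul_comm, one_mul, mul_one, smul_smul, smul_sub, smul_add]
      abel
    rw [this, h]
    match_scalars <;> (push_cast; ring)
  have expand' : ((t : ℂ) • 1 + y) * ((t : ℂ) • 1 - y) = ((t ^ 2 - r : ℝ) : ℂ) • 1 := by
    have : ((t : ℂ) • 1 + y) * ((t : ℂ) • 1 - y)
        = ((t:ℂ) * (t:ℂ)) • 1 - (t:ℂ) • y + (t:ℂ) • y - y * y := by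
      simp only [sub_mul, mul_sub, add_mul, smul_mul_assoc, mul_smul_comm, one_mul, mul_one,
        smul_smul, smul_sub, smul_add]
      abel
    rw [this, h]
    match_scalars <;> (push_cast; ring)
  have hmul1 : ((t : ℂ) • 1 - y) * u = 1 := by
    rw [hu, mul_smul_comm, expand, smul_smul, inv_mul_cancel₀ hcne, one_smul]
  have hmul2 : u * ((t : ℂ) • 1 - y) = 1 := by
    rw [hu, smul_mul_assoc, expand', smul_smul, inv_mul_cancel₀ hcne, one_smul]
  have hunit : IsUnit (algebraMap ℂ A z - y) := by
    rw [hzre, Algebra.algebraMap_eq_smul_one]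
    exact ⟨⟨(t : ℂ) • 1 - y, u, hmul1, hmul2⟩, rfl⟩
  exact (spectrum.mem_iff.mp hz) hunit

/-- A two-dimensional commutative unital star-subalgebra of a unital
C*-algebra which is an atom in the poset of commutative unital star-subalgebras is of the
form `span{p, 1 - p}` for a projection `p ≠ 0, 1`. -/
theorem stmt3 {A : Type*} [NormedRing A] [StarRing A] [CStarRing A] [CompleteSpace A]
    [NormedAlgebra ℂ A] [StarModule ℂ A]
    (S : StarSubalgebra ℂ A)
    (hcomm : ∀ x ∈ S, ∀ y ∈ S, x * y = y * x)
    (hdim : Module.finrank ℂ S = 2)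
    (hatom : ∀ T : StarSubalgebra ℂ A,
      (∀ x ∈ T, ∀ y ∈ T, x * y = y * x) → T < S → T = ⊥) :
    ∃ p : A, p * p = p ∧ star p = p ∧ p ≠ 0 ∧ p ≠ 1 ∧
      Subalgebra.toSubmodule (StarSubalgebra.toSubalgebra S)
        = Submodule.span ℂ ({p, 1 - p} : Set A) := by
  classical
  have hA : Nontrivial A := by
    by_contra h
    rw [not_nontrivial_iff_subsingleton] at h
    have hS : Subsingleton S := ⟨fun a b => Subtype.ext (Subsingleton.elim _ _)⟩
    rw [Module.finrank_zero_of_subsingleton] at hdim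
    exact absurd hdim (by norm_num)
  set V : Submodule ℂ A := Subalgebra.toSubmodule S.toSubalgebra with hV
  have hmemV : ∀ w : A, w ∈ V ↔ w ∈ S := fun w => Iff.rfl
  have hVfin : Module.finrank ℂ V = 2 := hdim
  have hFD : FiniteDimensional ℂ V := FiniteDimensional.of_finrank_eq_succ hVfin
  have h1V : (1 : A) ∈ V := (hmemV 1).mpr (one_mem S)
  -- find an element of V not in span {1}
  have hnotle : ¬ V ≤ Submodule.span ℂ {(1 : A)} := by
    intro hle
    have h1 : Module.finrank ℂ (Submodule.span ℂ {(1 : A)}) = 1 :=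
      finrank_span_singleton one_ne_zero
    have h2 := Submodule.finrank_mono hle
    rw [hVfin, h1] at h2
    omega
  obtain ⟨x0, hx0V, hx0⟩ := SetLike.not_le_iff_exists.mp hnotle
  -- replace it by a self-adjoint element not in span {1}
  obtain ⟨x, hxV, hxsa, hxns⟩ :
      ∃ x, x ∈ V ∧ star x = x ∧ x ∉ Submodule.span ℂ {(1 : A)} := by
    by_cases h1 : x0 + star x0 ∈ Submodule.span ℂ {(1 : A)}
    · refine ⟨Complex.I • (x0 - star x0), ?_, ?_, ?_⟩
      · exact Submodule.smul_mem _ _ (sub_mem hx0V ((hmemV _).mpr (star_mem hx0V)))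
      · rw [star_smul, star_sub, star_star]
        simp only [Complex.star_def, Complex.conj_I]
        module
      · intro h2
        apply hx0
        have : (x0 : A) = (2⁻¹ : ℂ) • (x0 + star x0)
            + (-(Complex.I) / 2) • (Complex.I • (x0 - star x0)) := by
          rw [smul_smul]
          have hI : (-(Complex.I) / 2) * Complex.I = (2⁻¹ : ℂ) := by
            rw [div_mul_eq_mul_div, neg_mul, Complex.I_mul_I, neg_neg]
            norm_num
          rw [hI]
          module
        rw [this]
        exact add_mem (Submodule.smul_mem _ _ h1) (Submodule.smul_mem _ _ h2)
    · exact ⟨x0 + star x0, add_mem hx0V ((hmemV _).mpr (star_mem hx0V)),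
        by rw [star_add, star_star, add_comm], h1⟩
  -- linear independence of {1, x}
  have hx_ne : ∀ c : ℂ, c • (1 : A) ≠ x := by
    intro c hc
    exact hxns (hc ▸ Submodule.smul_mem _ c (Submodule.mem_span_singleton_self 1))
  have hli : LinearIndependent ℂ ![(1 : A), x] :=
    (LinearIndependent.pair_iff' one_ne_zero).mpr hx_ne
  -- V = span {1, x}
  have hspan_le : Submodule.span ℂ {(1 : A), x} ≤ V := by
    rw [Submodule.span_le]
    rintro w hw
    rcases hw with rfl | hw
    · exact h1V
    · rw [Set.mem_singleton_iff] at hw; subst hw; exact hxV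
  have hrange : Set.range ![(1 : A), x] = {(1 : A), x} := by
    ext w
    simp [Matrix.range_cons, Matrix.range_empty, or_comm]
  have hspan_rank : Module.finrank ℂ (Submodule.span ℂ ({(1 : A), x} : Set A)) = 2 := by
    have h := finrank_span_eq_card hli
    rw [hrange] at h
    simpa using h
  have hVspan : V = Submodule.span ℂ ({(1 : A), x} : Set A) :=
    (Submodule.eq_of_le_of_finrank_eq hspan_le (by rw [hspan_rank, hVfin])).symm
  -- x * x as a linear combination of 1 and x
  have hxxV : x * x ∈ V := (hmemV _).mpr (mul_mem ((hmemV _).mp hxV) ((hmemV _).mp hxV))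
  have hxx : x * x ∈ Submodule.span ℂ ({(1 : A), x} : Set A) := hVspan ▸ hxxV
  obtain ⟨a, b, hab⟩ := Submodule.mem_span_pair.mp hxx
  -- the coefficients are real
  have hstar : (starRingEnd ℂ a) • (1 : A) + (starRingEnd ℂ b) • x = x * x := by
    have h1 : star (a • (1 : A) + b • x) = (starRingEnd ℂ a) • (1 : A) + (starRingEnd ℂ b) • x := by
      rw [star_add, star_smul, star_smul, star_one, hxsa]
      rfl
    rw [← h1, hab, star_mul, hxsa]
  have h0 : (a - starRingEnd ℂ a) • (1 : A) + (b - starRingEnd ℂ b) • x = 0 := by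
    have h' : a • (1 : A) + b • x
        - ((starRingEnd ℂ a) • (1 : A) + (starRingEnd ℂ b) • x) = 0 := by
      rw [hab, hstar, sub_self]
    linear_combination (norm := module) h'
  obtain ⟨ha0, hb0⟩ := LinearIndependent.pair_iff.mp hli _ _ h0
  have haR : a = (a.re : ℂ) := by
    have : starRingEnd ℂ a = a := (sub_eq_zero.mp ha0).symm
    exact (Complex.conj_eq_iff_re.mp this).symm
  have hbR : b = (b.re : ℂ) := by
    have : starRingEnd ℂ b = b := (sub_eq_zero.mp hb0).symm
    exact (Complex.conj_eq_iff_re.mp this).symm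
  set ar : ℝ := a.re with har
  set br : ℝ := b.re with hbr
  have hab' : x * x = (ar : ℂ) • (1 : A) + (br : ℂ) • x := by
    rw [← hab, ← haR, ← hbR]
  set D : ℝ := br ^ 2 + 4 * ar with hD
  rcases lt_trichotomy D 0 with hDneg | hDzero | hDpos
  · -- impossible: negative discriminant
    exfalso
    set y : A := x - ((br / 2 : ℝ) : ℂ) • 1 with hy
    have hysa : star y = y := by
      rw [hy, star_sub, star_smul, star_one, hxsa, Complex.star_def, Complex.conj_ofReal]
    have hyy : y * y = ((D / 4 : ℝ) : ℂ) • 1 := by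
      have h1 : y * y = x * x - ((br / 2 : ℝ) : ℂ) • x - ((br / 2 : ℝ) : ℂ) • x
          + (((br / 2 : ℝ) : ℂ) * ((br / 2 : ℝ) : ℂ)) • 1 := by
        rw [hy]
        simp only [sub_mul, mul_sub, smul_mul_assoc, mul_smul_comm, one_mul, mul_one, smul_smul, smul_sub, smul_add]
        abel
      rw [h1, hab', hD]
      match_scalars <;> (push_cast; ring)
    have hr4 : D / 4 < 0 := div_neg_of_neg_of_pos hDneg (by norm_num)
    exact stmt3_aux_neg_sq hysa hr4 hyy
  · -- impossible: zero discriminant (nilpotent self-adjoint)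
    exfalso
    set y : A := x - ((br / 2 : ℝ) : ℂ) • 1 with hy
    have hysa : star y = y := by
      rw [hy, star_sub, star_smul, star_one, hxsa, Complex.star_def, Complex.conj_ofReal]
    have hyy : y * y = 0 := by
      have h1 : y * y = x * x - ((br / 2 : ℝ) : ℂ) • x - ((br / 2 : ℝ) : ℂ) • x
          + (((br / 2 : ℝ) : ℂ) * ((br / 2 : ℝ) : ℂ)) • 1 := by
        rw [hy]
        simp only [sub_mul, mul_sub, smul_mul_assoc, mul_smul_comm, one_mul, mul_one, smul_smul, smul_sub, smul_add]
        abel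
      have h2 : ar = -(br ^ 2) / 4 := by
        rw [hD] at hDzero; linarith only [hDzero]
      rw [h1, hab', h2]
      match_scalars <;> (push_cast; ring)
    have hy0 : y = 0 := stmt3_aux_sq_zero hysa hyy
    apply hxns
    have : x = ((br / 2 : ℝ) : ℂ) • (1 : A) := by
      rw [hy] at hy0; exact sub_eq_zero.mp hy0
    rw [this]
    exact Submodule.smul_mem _ _ (Submodule.mem_span_singleton_self 1)
  · -- positive discriminant: construct the projection
    set d : ℝ := Real.sqrt D with hd
    have hdpos : 0 < d := Real.sqrt_pos.mpr hDpos
    have hd2 : (d : ℝ) ^ 2 = br ^ 2 + 4 * ar := by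
      rw [hd, Real.sq_sqrt hDpos.le, hD]
    have hd2C : (d : ℂ) ^ 2 = (br : ℂ) ^ 2 + 4 * (ar : ℂ) := by exact_mod_cast hd2
    have hdne : (d : ℂ) ≠ 0 := by exact_mod_cast ne_of_gt hdpos
    set m : ℝ := (br - d) / 2 with hm
    set p : A := ((d : ℂ))⁻¹ • (x - ((m : ℝ) : ℂ) • 1) with hp
    have key : (x - ((m : ℝ) : ℂ) • 1) * (x - ((m : ℝ) : ℂ) • 1)
        = (d : ℂ) • (x - ((m : ℝ) : ℂ) • 1) := by
      have h1 : (x - ((m : ℝ) : ℂ) • 1) * (x - ((m : ℝ) : ℂ) • 1)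
          = x * x - ((m : ℝ) : ℂ) • x - ((m : ℝ) : ℂ) • x
            + (((m : ℝ) : ℂ) * ((m : ℝ) : ℂ)) • 1 := by
        simp only [sub_mul, mul_sub, smul_mul_assoc, mul_smul_comm, one_mul, mul_one, smul_smul, smul_sub, smul_add]
        abel
      rw [h1, hab', hm]
      match_scalars <;>
        (push_cast
         first
         | ring1
         | linear_combination (-(1:ℂ)/4) * hd2C
         | linear_combination ((1:ℂ)/4) * hd2C)
    have hdp : (d : ℂ) • p = x - ((m : ℝ) : ℂ) • 1 := by
      rw [hp, smul_smul, mul_inv_cancel₀ hdne, one_smul]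
    have hpp : p * p = p := by
      have h1 : p * p = ((d : ℂ)⁻¹ * (d : ℂ)⁻¹)
          • ((x - ((m : ℝ) : ℂ) • 1) * (x - ((m : ℝ) : ℂ) • 1)) := by
        rw [hp, smul_mul_smul_comm]
      rw [h1, key, smul_smul, hp]
      congr 1
      field_simp
    have hpsa : star p = p := by
      rw [hp, star_smul, star_sub, star_smul, star_one, hxsa, Complex.star_def,
        Complex.conj_ofReal, map_inv₀, Complex.conj_ofReal]
    have hxm : x = (d : ℂ) • p + ((m : ℝ) : ℂ) • (1 : A) := by
      rw [hdp]; abel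
    have hp0 : p ≠ 0 := by
      intro h
      apply hxns
      rw [hxm, h, smul_zero, zero_add]
      exact Submodule.smul_mem _ _ (Submodule.mem_span_singleton_self 1)
    have hp1 : p ≠ 1 := by
      intro h
      apply hxns
      rw [hxm, h]
      exact add_mem (Submodule.smul_mem _ _ (Submodule.mem_span_singleton_self 1))
        (Submodule.smul_mem _ _ (Submodule.mem_span_singleton_self 1))
    refine ⟨p, hpp, hpsa, hp0, hp1, ?_⟩
    rw [hVspan]
    apply le_antisymm
    · rw [Submodule.span_le]
      have h1mem : (1 : A) ∈ Submodule.span ℂ ({p, 1 - p} : Set A) := by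
        have hmem := add_mem
          (Submodule.subset_span (Set.mem_insert p {1 - p}) :
            p ∈ Submodule.span ℂ ({p, 1 - p} : Set A))
          (Submodule.subset_span (Set.mem_insert_of_mem p rfl) :
            (1 : A) - p ∈ Submodule.span ℂ ({p, 1 - p} : Set A))
        simpa using hmem
      rintro w hw
      rcases hw with rfl | hw
      · exact h1mem
      · rw [Set.mem_singleton_iff] at hw; subst hw
        rw [hxm]
        exact add_mem
          (Submodule.smul_mem _ _ (Submodule.subset_span (Set.mem_insert _ _)))
          (Submodule.smul_mem _ _ h1mem)
    · rw [Submodule.span_le]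
      have hpmem : p ∈ Submodule.span ℂ ({(1 : A), x} : Set A) := by
        rw [hp]
        exact Submodule.smul_mem _ _ (sub_mem
          (Submodule.subset_span (Set.mem_insert_of_mem _ rfl))
          (Submodule.smul_mem _ _ (Submodule.subset_span (Set.mem_insert _ _))))
      rintro w hw
      rcases hw with rfl | hw
      · exact hpmem
      · rw [Set.mem_singleton_iff] at hw; subst hw
        exact sub_mem (Submodule.subset_span (Set.mem_insert _ _)) hpmem
end

section
/- In the spin factor V_n (n ≥ 2), for a unit vector μ ∈ H_n, the two-dimensional subalgebra span{½(1+μ), ½(1−μ)} is a maximal associative unital subalgebra: any element of V_n operator commuting with this subalgebra already belongs to it. -/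
/-!
Applying the commutation hypothesis to `s = p` and `z = (μ, 0)` and comparing vector parts gives
`x.1 = ⟪x.1, μ⟫ • μ`; and every element `(c • μ, t)` equals `(t + c) • p + (t - c) • (1 - p)`.
-/

/-- The Jordan product of the spin factor `V = H ⊕ ℝ1`. -/
def spinMul {H : Type*} [NormedAddCommGroup H] [InnerProductSpace ℝ H]
    (x y : H × ℝ) : H × ℝ :=
  (x.2 • y.1 + y.2 • x.1, (inner ℝ x.1 y.1 : ℝ) + x.2 * y.2)

section SpinFactor

variable {H : Type*} [NormedAddCommGroup H] [InnerProductSpace ℝ H] (μ : H)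

lemma fst_eq_inner_smul_of_spinMul_comm (hμ : ‖μ‖ = 1) (x : H × ℝ)
    (hx : spinMul x (spinMul ((1 / 2 : ℝ) • μ, 1 / 2) (μ, 0))
      = spinMul ((1 / 2 : ℝ) • μ, 1 / 2) (spinMul x (μ, 0))) :
    x.1 = (inner ℝ x.1 μ : ℝ) • μ := by
  have hfst := congrArg Prod.fst hx
  simp only [spinMul, real_inner_smul_left, real_inner_self_eq_norm_sq, hμ] at hfst
  have hhalf : (1 / 2 : ℝ) • x.1 = (1 / 2 : ℝ) • ((inner ℝ x.1 μ : ℝ) • μ) := by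
    linear_combination (norm := module) hfst
  exact smul_right_injective H (by norm_num) hhalf

lemma mem_span_idempotents_of_fst_eq_smul {x : H × ℝ} {c : ℝ} (hc : x.1 = c • μ) :
    x ∈ Submodule.span ℝ ({((1 / 2 : ℝ) • μ, 1 / 2), (-((1 / 2 : ℝ) • μ), 1 / 2)} :
      Set (H × ℝ)) := by
  have hx : x = (x.2 + c) • ((1 / 2 : ℝ) • μ, (1 / 2 : ℝ))
      + (x.2 - c) • (-((1 / 2 : ℝ) • μ), (1 / 2 : ℝ)) := by
    ext
    · simp only [Prod.fst_add, Prod.smul_fst, hc]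
      module
    · simp only [Prod.snd_add, Prod.smul_snd, smul_eq_mul]
      ring
  rw [hx]
  exact Submodule.add_mem _ (Submodule.smul_mem _ _ (Submodule.subset_span (by simp)))
    (Submodule.smul_mem _ _ (Submodule.subset_span (by simp)))

end SpinFactor

theorem stmt13_general {H : Type*} [NormedAddCommGroup H] [InnerProductSpace ℝ H]
    (μ : H) (hμ : ‖μ‖ = 1) :
    let p : H × ℝ := ((1 / 2 : ℝ) • μ, (1 / 2 : ℝ))
    let q : H × ℝ := (-((1 / 2 : ℝ) • μ), (1 / 2 : ℝ))
    let S := Submodule.span ℝ ({p, q} : Set (H × ℝ))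
    ∀ x : H × ℝ,
      (∀ s ∈ S, ∀ z : H × ℝ, spinMul x (spinMul s z) = spinMul s (spinMul x z)) →
      x ∈ S := by
  intro p q S x hx
  have hp : p ∈ S := Submodule.subset_span (Set.mem_insert _ _)
  exact mem_span_idempotents_of_fst_eq_smul μ
    (fst_eq_inner_smul_of_spinMul_comm μ hμ x (hx p hp (μ, 0)))

/-- In the spin factor (`dim H ≥ 2`), for a unit vector `μ`, the
two-dimensional subalgebra `span{½(1+μ), ½(1-μ)}` is a maximal associative unital
subalgebra: any element operator commuting with every element of it already belongs
to it. -/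
theorem stmt13 {H : Type*} [NormedAddCommGroup H] [InnerProductSpace ℝ H]
    (hdim : 2 ≤ Module.rank ℝ H) (μ : H) (hμ : ‖μ‖ = 1) :
    let p : H × ℝ := ((1 / 2 : ℝ) • μ, (1 / 2 : ℝ))
    let q : H × ℝ := (-((1 / 2 : ℝ) • μ), (1 / 2 : ℝ))
    let S := Submodule.span ℝ ({p, q} : Set (H × ℝ))
    ∀ x : H × ℝ,
      (∀ s ∈ S, ∀ z : H × ℝ, spinMul x (spinMul s z) = spinMul s (spinMul x z)) →
      x ∈ S :=
  stmt13_general μ hμ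
end

section
/- Let 𝒜 be a von Neumann algebra isomorphic to ℂ ⊕ ℂ (self-adjoint part ℝ ⊕ ℝ). Then the poset of associative (equivalently, all) real Jordan subalgebras of its self-adjoint part A = ℝ ⊕ ℝ consists of exactly five elements: {0}, three one-dimensional atoms span{(1,0)}, span{(0,1)}, span{(1,1)}, and A itself; consequently, there exists an order automorphism of this poset (permuting the atoms nontrivially, e.g., swapping span{(1,0)} and span{(1,1)}) that is not implemented by any Jordan automorphism of A. -/
noncomputable def L1 : NonUnitalSubalgebra ℝ (ℝ × ℝ) :=
  (Submodule.span ℝ ({((1:ℝ),(0:ℝ))} : Set (ℝ × ℝ))).toNonUnitalSubalgebra (by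
    intro x y hx hy
    rw [Submodule.mem_span_singleton] at *
    obtain ⟨a, rfl⟩ := hx; obtain ⟨b, rfl⟩ := hy
    exact ⟨a*b, by simp [Prod.ext_iff]⟩)

lemma mem_L1 (x : ℝ × ℝ) : x ∈ L1 ↔ x.2 = 0 := by
  rw [L1, Submodule.mem_toNonUnitalSubalgebra, Submodule.mem_span_singleton]
  constructor
  · rintro ⟨a, rfl⟩; simp
  · intro h; exact ⟨x.1, by simp [Prod.ext_iff, h]⟩

noncomputable def L2 : NonUnitalSubalgebra ℝ (ℝ × ℝ) :=
  (Submodule.span ℝ ({((0:ℝ),(1:ℝ))} : Set (ℝ × ℝ))).toNonUnitalSubalgebra (by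
    intro x y hx hy
    rw [Submodule.mem_span_singleton] at *
    obtain ⟨a, rfl⟩ := hx; obtain ⟨b, rfl⟩ := hy
    exact ⟨a*b, by simp [Prod.ext_iff]⟩)

lemma mem_L2 (x : ℝ × ℝ) : x ∈ L2 ↔ x.1 = 0 := by
  rw [L2, Submodule.mem_toNonUnitalSubalgebra, Submodule.mem_span_singleton]
  constructor
  · rintro ⟨a, rfl⟩; simp
  · intro h; exact ⟨x.2, by simp [Prod.ext_iff, h]⟩

noncomputable def L3 : NonUnitalSubalgebra ℝ (ℝ × ℝ) :=
  (Submodule.span ℝ ({((1:ℝ),(1:ℝ))} : Set (ℝ × ℝ))).toNonUnitalSubalgebra (by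
    intro x y hx hy
    rw [Submodule.mem_span_singleton] at *
    obtain ⟨a, rfl⟩ := hx; obtain ⟨b, rfl⟩ := hy
    exact ⟨a*b, by simp [Prod.ext_iff, mul_comm]⟩)

lemma mem_L3 (x : ℝ × ℝ) : x ∈ L3 ↔ x.1 = x.2 := by
  rw [L3, Submodule.mem_toNonUnitalSubalgebra, Submodule.mem_span_singleton]
  constructor
  · rintro ⟨a, rfl⟩; simp
  · intro h; exact ⟨x.1, by simp [Prod.ext_iff, h]⟩

lemma coe_L1 : (L1 : Set (ℝ × ℝ)) = (Submodule.span ℝ ({((1:ℝ),(0:ℝ))} : Set (ℝ × ℝ)) : Set (ℝ × ℝ)) :=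
  Submodule.coe_toNonUnitalSubalgebra _ _

lemma coe_L2 : (L2 : Set (ℝ × ℝ)) = (Submodule.span ℝ ({((0:ℝ),(1:ℝ))} : Set (ℝ × ℝ)) : Set (ℝ × ℝ)) :=
  Submodule.coe_toNonUnitalSubalgebra _ _

lemma coe_L3 : (L3 : Set (ℝ × ℝ)) = (Submodule.span ℝ ({((1:ℝ),(1:ℝ))} : Set (ℝ × ℝ)) : Set (ℝ × ℝ)) :=
  Submodule.coe_toNonUnitalSubalgebra _ _

lemma top_of (C : NonUnitalSubalgebra ℝ (ℝ × ℝ)) (x : ℝ × ℝ) (hx : x ∈ C)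
    (h1 : x.1 ≠ 0) (h2 : x.2 ≠ 0) (h12 : x.1 ≠ x.2) : C = ⊤ := by
  have hab : x.1 - x.2 ≠ 0 := sub_ne_zero.mpr h12
  have hba : x.2 - x.1 ≠ 0 := sub_ne_zero.mpr (Ne.symm h12)
  have hxx : x * x ∈ C := mul_mem hx hx
  have e1 : ((1:ℝ),(0:ℝ)) ∈ C := by
    have key : ((1:ℝ),(0:ℝ)) = (-x.2/(x.1*(x.1-x.2))) • x + (1/(x.1*(x.1-x.2))) • (x*x) := by
      simp only [Prod.mul_def, Prod.smul_mk, Prod.mk_add_mk, smul_eq_mul, Prod.smul_def,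
        Prod.ext_iff, Prod.fst_add, Prod.snd_add, Prod.fst_mul, Prod.snd_mul]
      constructor <;> field_simp <;> ring
    rw [key]
    exact add_mem (SMulMemClass.smul_mem _ hx) (SMulMemClass.smul_mem _ hxx)
  have e2 : ((0:ℝ),(1:ℝ)) ∈ C := by
    have key : ((0:ℝ),(1:ℝ)) = (-x.1/(x.2*(x.2-x.1))) • x + (1/(x.2*(x.2-x.1))) • (x*x) := by
      simp only [Prod.mul_def, Prod.smul_mk, Prod.mk_add_mk, smul_eq_mul, Prod.smul_def,
        Prod.ext_iff, Prod.fst_add, Prod.snd_add, Prod.fst_mul, Prod.snd_mul]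
      constructor <;> field_simp <;> ring
    rw [key]
    exact add_mem (SMulMemClass.smul_mem _ hx) (SMulMemClass.smul_mem _ hxx)
  rw [eq_top_iff]
  intro y _
  have : y = y.1 • ((1:ℝ),(0:ℝ)) + y.2 • ((0:ℝ),(1:ℝ)) := by
    simp [Prod.ext_iff]
  rw [this]
  exact add_mem (SMulMemClass.smul_mem _ e1) (SMulMemClass.smul_mem _ e2)

lemma classify (C : NonUnitalSubalgebra ℝ (ℝ × ℝ)) :
    C = ⊥ ∨ C = ⊤ ∨ C = L1 ∨ C = L2 ∨ C = L3 := by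
  by_cases htop : ∃ x ∈ C, x.1 ≠ 0 ∧ x.2 ≠ 0 ∧ x.1 ≠ x.2
  · obtain ⟨x, hx, h1, h2, h12⟩ := htop
    exact Or.inr (Or.inl (top_of C x hx h1 h2 h12))
  push_neg at htop
  -- htop : ∀ x ∈ C, x.1 ≠ 0 → x.2 ≠ 0 → x.1 = x.2
  have tri : ∀ x ∈ C, x.1 = 0 ∨ x.2 = 0 ∨ x.1 = x.2 := by
    intro x hx
    by_cases h1 : x.1 = 0
    · exact Or.inl h1
    by_cases h2 : x.2 = 0
    · exact Or.inr (Or.inl h2)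
    exact Or.inr (Or.inr (htop x hx h1 h2))
  by_cases hA : ∃ x ∈ C, x.1 ≠ 0 ∧ x.2 = 0
  · -- claim no B, no D
    obtain ⟨a, ha, ha1, ha2⟩ := hA
    by_cases hB : ∃ x ∈ C, x.1 = 0 ∧ x.2 ≠ 0
    · obtain ⟨b, hb, hb1, hb2⟩ := hB
      exfalso
      have hz : a + b ∈ C := add_mem ha hb
      have hw : a + (2:ℝ) • b ∈ C := add_mem ha (SMulMemClass.smul_mem _ hb)
      have e1 : (a + b).1 = a.1 := by simp [hb1]
      have e2 : (a + b).2 = b.2 := by simp [ha2]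
      have f1 : (a + (2:ℝ) • b).1 = a.1 := by simp [hb1]
      have f2 : (a + (2:ℝ) • b).2 = 2 * b.2 := by simp [ha2]
      have t1 := tri _ hz
      have t2 := tri _ hw
      rw [e1, e2] at t1; rw [f1, f2] at t2
      rcases t1 with h|h|h
      · exact ha1 h
      · exact hb2 h
      rcases t2 with h'|h'|h'
      · exact ha1 h'
      · exact hb2 (by linarith)
      · exact hb2 (by linarith)
    by_cases hD : ∃ x ∈ C, x.1 = x.2 ∧ x.1 ≠ 0
    · obtain ⟨d, hd, hd1, hd2⟩ := hD
      exfalso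
      have hd2' : d.2 ≠ 0 := hd1 ▸ hd2
      have hz : a + d ∈ C := add_mem ha hd
      have hw : a + (2:ℝ) • d ∈ C := add_mem ha (SMulMemClass.smul_mem _ hd)
      have t1 := tri _ hz
      have t2 := tri _ hw
      simp only [Prod.fst_add, Prod.snd_add, Prod.smul_fst, Prod.smul_snd, smul_eq_mul,
        ha2, add_zero, zero_add] at t1 t2
      rw [hd1] at t1 t2
      rcases t1 with h|h|h
      · rcases t2 with h'|h'|h'
        · exact hd2' (by linarith)
        · exact hd2' (by linarith)
        · exact ha1 (by linarith)
      · exact hd2' h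
      · exact ha1 (by linarith)
    -- only A: C = L1
    right; right; left
    ext x
    rw [mem_L1]
    constructor
    · intro hx
      by_contra h2
      rcases tri x hx with h|h|h
      · exact hB ⟨x, hx, h, h2⟩
      · exact h2 h
      · exact hD ⟨x, hx, h, fun h0 => h2 (by rw [← h]; exact h0)⟩
    · intro hx2
      have : x = (x.1 / a.1) • a := by
        simp [Prod.ext_iff, ha2, hx2, div_mul_cancel₀, ha1]
      rw [this]
      exact SMulMemClass.smul_mem _ ha
  by_cases hB : ∃ x ∈ C, x.1 = 0 ∧ x.2 ≠ 0
  · obtain ⟨b, hb, hb1, hb2⟩ := hB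
    by_cases hD : ∃ x ∈ C, x.1 = x.2 ∧ x.1 ≠ 0
    · obtain ⟨d, hd, hd1, hd2⟩ := hD
      exfalso
      have hd2' : d.2 ≠ 0 := hd1 ▸ hd2
      have hz : b + d ∈ C := add_mem hb hd
      have hw : b + (2:ℝ) • d ∈ C := add_mem hb (SMulMemClass.smul_mem _ hd)
      have t1 := tri _ hz
      have t2 := tri _ hw
      simp only [Prod.fst_add, Prod.snd_add, Prod.smul_fst, Prod.smul_snd, smul_eq_mul,
        hb1, zero_add, add_zero] at t1 t2
      rw [hd1] at t1 t2 hd2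
      rcases t1 with h|h|h
      · exact hd2 h
      · rcases t2 with h'|h'|h'
        · exact hd2 (by linarith)
        · exact hd2 (by linarith)
        · exact hb2 (by linarith)
      · exact hb2 (by linarith)
    -- only B: C = L2
    right; right; right; left
    ext x
    rw [mem_L2]
    constructor
    · intro hx
      by_contra h1
      rcases tri x hx with h|h|h
      · exact h1 h
      · exact hA ⟨x, hx, h1, h⟩
      · exact hD ⟨x, hx, h, h1⟩
    · intro hx1
      have : x = (x.2 / b.2) • b := by
        simp [Prod.ext_iff, hb1, hx1, div_mul_cancel₀, hb2]
      rw [this]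
      exact SMulMemClass.smul_mem _ hb
  by_cases hD : ∃ x ∈ C, x.1 = x.2 ∧ x.1 ≠ 0
  · obtain ⟨d, hd, hd1, hd2⟩ := hD
    -- only D: C = L3
    right; right; right; right
    ext x
    rw [mem_L3]
    constructor
    · intro hx
      rcases tri x hx with h|h|h
      · by_cases h2 : x.2 = 0
        · rw [h, h2]
        · exact absurd ⟨x, hx, h, h2⟩ hB
      · by_cases h1 : x.1 = 0
        · rw [h, h1]
        · exact absurd ⟨x, hx, h1, h⟩ hA
      · exact h
    · intro hx
      have : x = (x.1 / d.1) • d := by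
        simp only [Prod.smul_def, smul_eq_mul, Prod.ext_iff]
        constructor
        · rw [div_mul_cancel₀ _ hd2]
        · rw [← hd1, div_mul_cancel₀ _ hd2, hx]
      rw [this]
      exact SMulMemClass.smul_mem _ hd
  · left
    ext x
    rw [NonUnitalAlgebra.mem_bot]
    constructor
    · intro hx
      rcases tri x hx with h|h|h
      · by_cases h2 : x.2 = 0
        · exact Prod.ext h h2
        · exact absurd ⟨x, hx, h, h2⟩ hB
      · by_cases h1 : x.1 = 0
        · exact Prod.ext h1 h
        · exact absurd ⟨x, hx, h1, h⟩ hA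
      · by_cases h1 : x.1 = 0
        · exact Prod.ext h1 (h ▸ h1)
        · exact absurd ⟨x, hx, h, h1⟩ hD
    · rintro rfl; exact zero_mem C

lemma bot_ne_L1 : (⊥ : NonUnitalSubalgebra ℝ (ℝ × ℝ)) ≠ L1 := by
  intro h
  have := (mem_L1 ((1:ℝ),(0:ℝ))).mpr rfl
  rw [← h, NonUnitalAlgebra.mem_bot] at this
  simp [Prod.ext_iff] at this

lemma bot_ne_L2 : (⊥ : NonUnitalSubalgebra ℝ (ℝ × ℝ)) ≠ L2 := by
  intro h
  have := (mem_L2 ((0:ℝ),(1:ℝ))).mpr rfl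
  rw [← h, NonUnitalAlgebra.mem_bot] at this
  simp [Prod.ext_iff] at this

lemma bot_ne_L3 : (⊥ : NonUnitalSubalgebra ℝ (ℝ × ℝ)) ≠ L3 := by
  intro h
  have := (mem_L3 ((1:ℝ),(1:ℝ))).mpr rfl
  rw [← h, NonUnitalAlgebra.mem_bot] at this
  simp [Prod.ext_iff] at this

lemma top_ne_L1 : (⊤ : NonUnitalSubalgebra ℝ (ℝ × ℝ)) ≠ L1 := by
  intro h
  have : ((0:ℝ),(1:ℝ)) ∈ (⊤ : NonUnitalSubalgebra ℝ (ℝ × ℝ)) := trivial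
  rw [h, mem_L1] at this
  exact one_ne_zero this

lemma top_ne_L2 : (⊤ : NonUnitalSubalgebra ℝ (ℝ × ℝ)) ≠ L2 := by
  intro h
  have : ((1:ℝ),(0:ℝ)) ∈ (⊤ : NonUnitalSubalgebra ℝ (ℝ × ℝ)) := trivial
  rw [h, mem_L2] at this
  exact one_ne_zero this

lemma top_ne_L3 : (⊤ : NonUnitalSubalgebra ℝ (ℝ × ℝ)) ≠ L3 := by
  intro h
  have : ((1:ℝ),(0:ℝ)) ∈ (⊤ : NonUnitalSubalgebra ℝ (ℝ × ℝ)) := trivial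
  rw [h, mem_L3] at this
  exact one_ne_zero this

lemma L1_ne_L2 : L1 ≠ L2 := by
  intro h
  have := (mem_L1 ((1:ℝ),(0:ℝ))).mpr rfl
  rw [h, mem_L2] at this
  exact one_ne_zero this

lemma L1_ne_L3 : L1 ≠ L3 := by
  intro h
  have := (mem_L1 ((1:ℝ),(0:ℝ))).mpr rfl
  rw [h, mem_L3] at this
  exact one_ne_zero this

lemma L2_ne_L3 : L2 ≠ L3 := by
  intro h
  have := (mem_L2 ((0:ℝ),(1:ℝ))).mpr rfl
  rw [h, mem_L3] at this
  exact zero_ne_one this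

lemma bot_ne_top' : (⊥ : NonUnitalSubalgebra ℝ (ℝ × ℝ)) ≠ ⊤ := by
  intro h
  have : ((1:ℝ),(0:ℝ)) ∈ (⊤ : NonUnitalSubalgebra ℝ (ℝ × ℝ)) := trivial
  rw [← h, NonUnitalAlgebra.mem_bot] at this
  simp [Prod.ext_iff] at this

lemma le_iff (C D : NonUnitalSubalgebra ℝ (ℝ × ℝ)) :
    C ≤ D ↔ C = ⊥ ∨ D = ⊤ ∨ C = D := by
  constructor
  · intro h
    rcases classify C with rfl|rfl|rfl|rfl|rfl
    · exact Or.inl rfl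
    · exact Or.inr (Or.inl (top_le_iff.mp h))
    · rcases classify D with rfl|rfl|rfl|rfl|rfl
      · exact absurd (le_bot_iff.mp h) (Ne.symm bot_ne_L1)
      · exact Or.inr (Or.inl rfl)
      · exact Or.inr (Or.inr rfl)
      · have := h ((mem_L1 ((1:ℝ),(0:ℝ))).mpr rfl)
        rw [mem_L2] at this; exact absurd this one_ne_zero
      · have := h ((mem_L1 ((1:ℝ),(0:ℝ))).mpr rfl)
        rw [mem_L3] at this; exact absurd this one_ne_zero
    · rcases classify D with rfl|rfl|rfl|rfl|rfl
      · exact absurd (le_bot_iff.mp h) (Ne.symm bot_ne_L2)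
      · exact Or.inr (Or.inl rfl)
      · have := h ((mem_L2 ((0:ℝ),(1:ℝ))).mpr rfl)
        rw [mem_L1] at this; exact absurd this one_ne_zero
      · exact Or.inr (Or.inr rfl)
      · have := h ((mem_L2 ((0:ℝ),(1:ℝ))).mpr rfl)
        rw [mem_L3] at this; exact absurd this zero_ne_one
    · rcases classify D with rfl|rfl|rfl|rfl|rfl
      · exact absurd (le_bot_iff.mp h) (Ne.symm bot_ne_L3)
      · exact Or.inr (Or.inl rfl)
      · have := h ((mem_L3 ((1:ℝ),(1:ℝ))).mpr rfl)
        rw [mem_L1] at this; exact absurd this one_ne_zero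
      · have := h ((mem_L3 ((1:ℝ),(1:ℝ))).mpr rfl)
        rw [mem_L2] at this; exact absurd this one_ne_zero
      · exact Or.inr (Or.inr rfl)
  · rintro (rfl|rfl|rfl)
    · exact bot_le
    · exact le_top
    · exact le_refl _

noncomputable instance : DecidableEq (NonUnitalSubalgebra ℝ (ℝ × ℝ)) := Classical.decEq _

noncomputable def sw : NonUnitalSubalgebra ℝ (ℝ × ℝ) ≃o NonUnitalSubalgebra ℝ (ℝ × ℝ) where
  toEquiv := Equiv.swap L1 L3
  map_rel_iff' := by
    intro a b
    have hbot : Equiv.swap L1 L3 ⊥ = ⊥ :=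
      Equiv.swap_apply_of_ne_of_ne bot_ne_L1 bot_ne_L3
    have htop : Equiv.swap L1 L3 ⊤ = ⊤ :=
      Equiv.swap_apply_of_ne_of_ne top_ne_L1 top_ne_L3
    have inj := (Equiv.swap L1 L3).injective
    show Equiv.swap L1 L3 a ≤ Equiv.swap L1 L3 b ↔ a ≤ b
    rw [le_iff, le_iff, ← hbot, ← htop, inj.eq_iff, inj.eq_iff, inj.eq_iff, hbot, htop]

/-- The poset of (Jordan, i.e. non-unital) subalgebras of `ℝ ⊕ ℝ` consists
of exactly the five elements `{0}`, `span{(1,0)}`, `span{(0,1)}`, `span{(1,1)}` and the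
whole algebra, and there is an order automorphism of this poset not implemented by any
(Jordan) algebra automorphism of `ℝ ⊕ ℝ`. -/
theorem stmt18 :
    (∀ C : NonUnitalSubalgebra ℝ (ℝ × ℝ),
      C = ⊥ ∨ C = ⊤ ∨
      (C : Set (ℝ × ℝ)) = (Submodule.span ℝ ({((1 : ℝ), (0 : ℝ))} : Set (ℝ × ℝ)) : Set (ℝ × ℝ)) ∨
      (C : Set (ℝ × ℝ)) = (Submodule.span ℝ ({((0 : ℝ), (1 : ℝ))} : Set (ℝ × ℝ)) : Set (ℝ × ℝ)) ∨
      (C : Set (ℝ × ℝ)) = (Submodule.span ℝ ({((1 : ℝ), (1 : ℝ))} : Set (ℝ × ℝ)) : Set (ℝ × ℝ))) ∧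
    ((Set.ncard {C : NonUnitalSubalgebra ℝ (ℝ × ℝ) | True}) = 5) ∧
    ∃ φ : NonUnitalSubalgebra ℝ (ℝ × ℝ) ≃o NonUnitalSubalgebra ℝ (ℝ × ℝ),
      ¬ ∃ ψ : (ℝ × ℝ) ≃ₐ[ℝ] (ℝ × ℝ),
        ∀ (C : NonUnitalSubalgebra ℝ (ℝ × ℝ)) (x : ℝ × ℝ),
          x ∈ C ↔ ψ x ∈ φ C := by
  refine ⟨?_, ?_, sw, ?_⟩
  · intro C
    rcases classify C with rfl|rfl|rfl|rfl|rfl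
    · exact Or.inl rfl
    · exact Or.inr (Or.inl rfl)
    · exact Or.inr (Or.inr (Or.inl coe_L1))
    · exact Or.inr (Or.inr (Or.inr (Or.inl coe_L2)))
    · exact Or.inr (Or.inr (Or.inr (Or.inr coe_L3)))
  · have huniv : {C : NonUnitalSubalgebra ℝ (ℝ × ℝ) | True} =
        ({⊥, ⊤, L1, L2, L3} : Set (NonUnitalSubalgebra ℝ (ℝ × ℝ))) := by
      ext C
      simp only [Set.mem_setOf_eq, Set.mem_insert_iff, Set.mem_singleton_iff, true_iff]
      exact classify C
    rw [huniv]
    have h2 : (L2 : NonUnitalSubalgebra ℝ (ℝ × ℝ)) ∉ ({L3} : Set _) := by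
      simp only [Set.mem_singleton_iff]; exact L2_ne_L3
    have h1 : (L1 : NonUnitalSubalgebra ℝ (ℝ × ℝ)) ∉ ({L2, L3} : Set _) := by
      simp only [Set.mem_insert_iff, Set.mem_singleton_iff]; push_neg
      exact ⟨L1_ne_L2, L1_ne_L3⟩
    have ht : (⊤ : NonUnitalSubalgebra ℝ (ℝ × ℝ)) ∉ ({L1, L2, L3} : Set _) := by
      simp only [Set.mem_insert_iff, Set.mem_singleton_iff]; push_neg
      exact ⟨top_ne_L1, top_ne_L2, top_ne_L3⟩
    have hb : (⊥ : NonUnitalSubalgebra ℝ (ℝ × ℝ)) ∉ ({⊤, L1, L2, L3} : Set _) := by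
      simp only [Set.mem_insert_iff, Set.mem_singleton_iff]; push_neg
      exact ⟨bot_ne_top', bot_ne_L1, bot_ne_L2, bot_ne_L3⟩
    rw [Set.ncard_insert_of_notMem hb
        ((((Set.finite_singleton _).insert _).insert _).insert _),
      Set.ncard_insert_of_notMem ht
        (((Set.finite_singleton _).insert _).insert _),
      Set.ncard_insert_of_notMem h1 ((Set.finite_singleton _).insert _),
      Set.ncard_insert_of_notMem h2 (Set.finite_singleton _), Set.ncard_singleton]
  · rintro ⟨ψ, hψ⟩
    have h13 : sw L3 = L1 := by
      show Equiv.swap L1 L3 L3 = L1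
      exact Equiv.swap_apply_right _ _
    have hm : ((1:ℝ),(1:ℝ)) ∈ L3 := (mem_L3 _).mpr rfl
    have hmem := (hψ L3 ((1:ℝ),(1:ℝ))).mp hm
    rw [h13] at hmem
    have hone : ψ ((1:ℝ),(1:ℝ)) = ((1:ℝ),(1:ℝ)) := map_one ψ
    rw [hone, mem_L1] at hmem
    exact one_ne_zero hmem
end
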